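/- Let δ > 0, R > 0, and R' ≥ 1. Let h ∈ (0,1] be such that M = 1/h is an integer. Then for every θ ∈ {−1,1}^{M^{p+q}} the following hold for the perturbed uniform density f_θ: (1) if the constant satisfies C₀ ≤ min{1, R'−1}·e^{p+q}, then f_θ is a probability density function and max{‖f_θ‖_∞, ‖f_{θ,1}‖_∞, ‖f_{θ,2}‖_∞} ≤ R', where f_{θ,1} and f_{θ,2} are the marginals of f_θ on ℝ^p and ℝ^q; (2) ‖f_θ − f_{θ,1}⊗f_{θ,2}‖_2 = C₀·‖G‖_2^{p+q}·h^δ. -/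

import Mathlib

open MeasureTheory ProbabilityTheory Real
open scoped BigOperators ENNReal

noncomputable section

/-- The measure with density `f` w.r.t. Lebesgue measure. -/
def densMeasure {E : Type*} [MeasureSpace E] (f : E → ℝ) : Measure E :=
  volume.withDensity fun z => ENNReal.ofReal (f z)

/-- The law `P_f` of an i.i.d. `n`-sample with common density `f`. -/
def sampleLaw (n : ℕ) {E : Type*} [MeasureSpace E] (f : E → ℝ) : Measure (Fin n → E) :=
  Measure.pi fun _ => densMeasure f

/-- First marginal density of a density on `ℝ^p × ℝ^q`. -/
def marg1 (p q : ℕ) (f : (Fin p → ℝ) × (Fin q → ℝ) → ℝ) (x : Fin p → ℝ) : ℝ :=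
  ∫ y, f (x, y)

/-- Second marginal density of a density on `ℝ^p × ℝ^q`. -/
def marg2 (p q : ℕ) (f : (Fin p → ℝ) × (Fin q → ℝ) → ℝ) (y : Fin q → ℝ) : ℝ :=
  ∫ x, f (x, y)

/-- `ψ = f − f_1 ⊗ f_2`. -/
def psiOf (p q : ℕ) (f : (Fin p → ℝ) × (Fin q → ℝ) → ℝ) :
    (Fin p → ℝ) × (Fin q → ℝ) → ℝ :=
  fun z => f z - marg1 p q f z.1 * marg2 p q f z.2

/-- The function `G` of the lower-bound construction. -/
def Gfun (t : ℝ) : ℝ :=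
  (if -1 < t ∧ t < -(1/2) then Real.exp (-1 / (1 - (4*t+3) ^ 2)) else 0)
  - (if -(1/2) < t ∧ t < 0 then Real.exp (-1 / (1 - (4*t+1) ^ 2)) else 0)

/-- The rescaled function `G_h(t) = (1/h)·G(t/h)`. -/
def Gscale (h t : ℝ) : ℝ := (1 / h) * Gfun (t / h)

/-- The perturbed uniform density `f_θ` on `[0,1]^{p+q}`, with perturbation scale `h = 1/M`,
regularity exponent `δ`, amplitude `C₀` and sign vector `θ`. -/
def fTheta (p q : ℕ) (δ C0 h : ℝ) (M : ℕ)
    (θ : (Fin p → Fin M) × (Fin q → Fin M) → ℝ)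
    (z : (Fin p → ℝ) × (Fin q → ℝ)) : ℝ :=
  (if (∀ r, 0 ≤ z.1 r ∧ z.1 r ≤ 1) ∧ (∀ s, 0 ≤ z.2 s ∧ z.2 s ≤ 1) then (1:ℝ) else 0)
  + C0 * h ^ (δ + ((p : ℝ) + q)) *
    ∑ jl : (Fin p → Fin M) × (Fin q → Fin M),
      θ jl * (∏ r, Gscale h (z.1 r - (((jl.1 r : ℕ) : ℝ) + 1) * h)) *
             (∏ s, Gscale h (z.2 s - (((jl.2 s : ℕ) : ℝ) + 1) * h))

/-! Write `f_θ = 1_{[0,1]^p} ⊗ 1_{[0,1]^q} + c · ∑ θ_{(j,l)} g_j ⊗ g_l` with `c = C₀ h^{δ+p+q}`,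
where `g_j(x) = ∏_r G_h(x_r - j_r h)` is supported in the grid cell of `j`. Since `∫ G = 0`,
every term of the perturbation integrates to zero in `x` and in `y` separately, so the marginals
are the uniform densities and `f_θ - f_{θ,1} ⊗ f_{θ,2}` is exactly the perturbation. The grid
cells are disjoint, so at each point at most one term is nonzero, which bounds the perturbation by
`c (e⁻¹/h)^{p+q} = C₀ h^δ e^{-(p+q)}`; and the terms are orthogonal in `L²`, each with squared
norm `(‖G‖₂² / h)^{p+q}`, so summing the `M^{p+q} = h^{-(p+q)}` of them gives the `L²` identity. -/

lemma abs_sum_le_of_support_subsingleton {ι : Type*} [Fintype ι] {f : ι → ℝ} {B : ℝ}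
    (hB₀ : 0 ≤ B) (hB : ∀ i, |f i| ≤ B) (hf : (Function.support f).Subsingleton) :
    |∑ i, f i| ≤ B := by
  rcases hf.eq_empty_or_singleton with hempty | ⟨i, hi⟩
  · rw [Function.support_eq_empty_iff.1 hempty]
    simpa using hB₀
  · rw [Finset.sum_eq_single i (fun k _ hk => Function.notMem_support.1 (hi ▸ hk))
      (fun hi' => absurd (Finset.mem_univ i) hi')]
    exact hB i

lemma integral_sum_sq_of_orthogonal {α ι : Type*} [MeasurableSpace α] {μ : Measure α}
    [Fintype ι] [DecidableEq ι] {f : ι → α → ℝ} {c : ι → ℝ}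
    (hint : ∀ i j, Integrable (fun x => f i x * f j x) μ)
    (horth : ∀ i j, ∫ x, f i x * f j x ∂μ = if i = j then c i else 0) :
    ∫ x, (∑ i, f i x) ^ 2 ∂μ = ∑ i, c i := by
  simp only [sq, Finset.sum_mul_sum]
  rw [integral_finsetSum _ fun i _ => integrable_finsetSum _ fun j _ => hint i j]
  refine Finset.sum_congr rfl fun i _ => ?_
  rw [integral_finsetSum _ fun j _ => hint i j]
  simp [horth]

lemma rpow_add_natCast_add {x : ℝ} (hx : x ≠ 0) (y : ℝ) (m n : ℕ) :
    x ^ (y + ((m : ℝ) + n)) = x ^ y * x ^ (m + n) := by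
  rw [← Nat.cast_add, Real.rpow_add_natCast hx]

def halfBump (t : ℝ) : ℝ := if -1 < t ∧ t < -(1/2) then exp (-1 / (1 - (4*t+3) ^ 2)) else 0

lemma halfBump_nonneg (t : ℝ) : 0 ≤ halfBump t := by
  unfold halfBump; split_ifs <;> positivity

lemma halfBump_le (t : ℝ) : halfBump t ≤ exp (-1) := by
  unfold halfBump
  split_ifs with ht
  · have hpos : 0 < 1 - (4*t+3) ^ 2 := by nlinarith [ht.1, ht.2]
    gcongr
    rw [neg_div, neg_le_neg_iff, le_div_iff₀ hpos]
    nlinarith [sq_nonneg (4*t+3)]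
  · positivity

lemma support_halfBump_subset : Function.support halfBump ⊆ Set.Ioo (-1) (-(1/2)) := by
  intro t ht
  by_contra hc
  exact ht (if_neg hc)

lemma measurable_halfBump : Measurable halfBump :=
  Measurable.ite measurableSet_Ioo (by fun_prop) measurable_const

lemma integrable_halfBump : Integrable halfBump := by
  refine (integrableOn_iff_integrable_of_support_subset support_halfBump_subset).1 ?_
  refine Measure.integrableOn_of_bounded (M := exp (-1)) (by simp)
    measurable_halfBump.aestronglyMeasurable (ae_of_all _ fun t => ?_)
  rw [Real.norm_of_nonneg (halfBump_nonneg t)]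
  exact halfBump_le t

lemma Gfun_eq_halfBump_sub (t : ℝ) : Gfun t = halfBump t - halfBump (t - 1/2) := by
  unfold Gfun halfBump
  congr 1
  have hshift : 4 * (t - 1/2) + 3 = 4 * t + 1 := by ring
  simp only [hshift]
  congr 1
  apply propext
  constructor <;> rintro ⟨h1, h2⟩ <;> constructor <;> linarith

lemma abs_Gfun_le (t : ℝ) : |Gfun t| ≤ exp (-1) := by
  rw [Gfun_eq_halfBump_sub, abs_sub_le_iff]
  constructor <;>
  linarith [halfBump_le t, halfBump_nonneg (t - 1/2), halfBump_le (t - 1/2), halfBump_nonneg t]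

lemma support_Gfun_subset : Function.support Gfun ⊆ Set.Ioo (-1) 0 := by
  intro t ht
  rw [Function.mem_support, Gfun_eq_halfBump_sub] at ht
  by_cases h₁ : halfBump t = 0
  · have := support_halfBump_subset (show halfBump (t - 1/2) ≠ 0 by intro hzero; simp_all)
    exact ⟨by linarith [this.1], by linarith [this.2]⟩
  · have := support_halfBump_subset h₁
    exact ⟨this.1, by linarith [this.2]⟩

lemma integrable_Gfun : Integrable Gfun := by
  rw [show Gfun = fun t => halfBump t - halfBump (t - 1/2) from funext Gfun_eq_halfBump_sub]
  exact integrable_halfBump.sub (integrable_halfBump.comp_sub_right _)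

lemma integral_Gfun : ∫ t, Gfun t = 0 := by
  simp_rw [Gfun_eq_halfBump_sub]
  rw [integral_sub integrable_halfBump (integrable_halfBump.comp_sub_right _),
    integral_sub_right_eq_self, sub_self]

-- The paper's grid index `j ∈ {1, …, M}` is `j + 1` here, for `j : Fin M` in `fTheta`.
def gridBump (h : ℝ) (j : ℕ) (t : ℝ) : ℝ := Gscale h (t - (j + 1) * h)

section GridBump

variable {h : ℝ}

lemma abs_gridBump_le (hh : 0 ≤ h) (j : ℕ) (t : ℝ) : |gridBump h j t| ≤ h⁻¹ * exp (-1) := by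
  rw [gridBump, Gscale, abs_mul, one_div, abs_of_nonneg (inv_nonneg.2 hh)]
  exact mul_le_mul_of_nonneg_left (abs_Gfun_le _) (inv_nonneg.2 hh)

lemma mem_Ioo_of_gridBump_ne_zero (hh : 0 < h) {j : ℕ} {t : ℝ} (ht : gridBump h j t ≠ 0) :
    t ∈ Set.Ioo (j * h) ((j + 1) * h) := by
  obtain ⟨h₁, h₂⟩ := support_Gfun_subset (right_ne_zero_of_mul ht)
  rw [lt_div_iff₀ hh] at h₁
  rw [div_lt_iff₀ hh] at h₂
  constructor <;> linarith

lemma eq_of_gridBump_ne_zero (hh : 0 < h) {j j' : ℕ} {t : ℝ} (hj : gridBump h j t ≠ 0)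
    (hj' : gridBump h j' t ≠ 0) : j = j' := by
  obtain ⟨a₁, a₂⟩ := mem_Ioo_of_gridBump_ne_zero hh hj
  obtain ⟨b₁, b₂⟩ := mem_Ioo_of_gridBump_ne_zero hh hj'
  have h₁ : (j : ℝ) < j' + 1 := lt_of_mul_lt_mul_right (a₁.trans b₂) hh.le
  have h₂ : (j' : ℝ) < j + 1 := lt_of_mul_lt_mul_right (b₁.trans a₂) hh.le
  norm_cast at h₁ h₂
  omega

lemma integrable_gridBump (hh : h ≠ 0) (j : ℕ) : Integrable (gridBump h j) :=
  ((integrable_Gfun.comp_div hh).comp_sub_right _).const_mul _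

lemma integral_gridBump (j : ℕ) : ∫ t, gridBump h j t = 0 := by
  simp only [gridBump, Gscale]
  rw [integral_const_mul, integral_sub_right_eq_self (fun t => Gfun (t / h)),
    Measure.integral_comp_div, integral_Gfun, smul_zero, mul_zero]

lemma integral_gridBump_sq (hh : 0 < h) (j : ℕ) :
    ∫ t, gridBump h j t ^ 2 = h⁻¹ * ∫ t, Gfun t ^ 2 := by
  simp only [gridBump, Gscale, mul_pow]
  rw [integral_const_mul, integral_sub_right_eq_self (fun t => Gfun (t / h) ^ 2),
    Measure.integral_comp_div (fun t => Gfun t ^ 2), abs_of_pos hh, smul_eq_mul]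
  field_simp

lemma integrable_gridBump_mul (hh : 0 < h) (j j' : ℕ) :
    Integrable fun t => gridBump h j t * gridBump h j' t :=
  (integrable_gridBump hh.ne' j').bdd_mul (integrable_gridBump hh.ne' j).aestronglyMeasurable
    (ae_of_all _ fun t => abs_gridBump_le hh.le j t)

lemma integral_gridBump_mul (hh : 0 < h) (j j' : ℕ) :
    ∫ t, gridBump h j t * gridBump h j' t = if j = j' then h⁻¹ * ∫ t, Gfun t ^ 2 else 0 := by
  split_ifs with hjj
  · subst hjj
    simp only [← sq, integral_gridBump_sq hh]
  · have hzero : ∀ t, gridBump h j t * gridBump h j' t = 0 := fun t => by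
      by_contra hne
      exact hjj (eq_of_gridBump_ne_zero hh (left_ne_zero_of_mul hne)
        (right_ne_zero_of_mul hne))
    simp [hzero]

end GridBump

def gridTensor (h : ℝ) {n M : ℕ} (j : Fin n → Fin M) (x : Fin n → ℝ) : ℝ :=
  ∏ r, gridBump h (j r) (x r)

section GridTensor

variable {h : ℝ} {n M : ℕ}

lemma abs_gridTensor_le (hh : 0 ≤ h) (j : Fin n → Fin M) (x : Fin n → ℝ) :
    |gridTensor h j x| ≤ (h⁻¹ * exp (-1)) ^ n := by
  rw [gridTensor, Finset.abs_prod]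
  calc ∏ r, |gridBump h (j r) (x r)| ≤ ∏ _r : Fin n, h⁻¹ * exp (-1) :=
        Finset.prod_le_prod (fun r _ => abs_nonneg _) (fun r _ => abs_gridBump_le hh _ _)
    _ = (h⁻¹ * exp (-1)) ^ n := by simp

lemma eq_of_gridTensor_ne_zero (hh : 0 < h) {j j' : Fin n → Fin M} {x : Fin n → ℝ}
    (hj : gridTensor h j x ≠ 0) (hj' : gridTensor h j' x ≠ 0) : j = j' := by
  rw [gridTensor, Finset.prod_ne_zero_iff] at hj hj'
  exact funext fun r => Fin.ext <|
    eq_of_gridBump_ne_zero hh (hj r (Finset.mem_univ r)) (hj' r (Finset.mem_univ r))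

lemma mem_Icc_of_gridTensor_ne_zero (hh : 0 < h) (hMh : M * h = 1) {j : Fin n → Fin M}
    {x : Fin n → ℝ} (hj : gridTensor h j x ≠ 0) : x ∈ Set.Icc 0 1 := by
  rw [gridTensor, Finset.prod_ne_zero_iff] at hj
  have hx : ∀ r, 0 ≤ x r ∧ x r ≤ 1 := fun r => by
    obtain ⟨h₁, h₂⟩ := mem_Ioo_of_gridBump_ne_zero hh (hj r (Finset.mem_univ r))
    have hjM : ((j r : ℕ) : ℝ) + 1 ≤ M := by exact_mod_cast (j r).isLt
    constructor <;> nlinarith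
  exact ⟨fun r => (hx r).1, fun r => (hx r).2⟩

lemma integrable_gridTensor (hh : h ≠ 0) (j : Fin n → Fin M) : Integrable (gridTensor h j) :=
  Integrable.fintype_prod fun r => integrable_gridBump hh (j r)

lemma integral_gridTensor (hn : 0 < n) (j : Fin n → Fin M) : ∫ x, gridTensor h j x = 0 := by
  unfold gridTensor
  rw [integral_fintype_prod_volume_eq_prod (fun r => gridBump h (j r))]
  exact Finset.prod_eq_zero (Finset.mem_univ ⟨0, hn⟩) (integral_gridBump _)

lemma gridTensor_mul_gridTensor (j j' : Fin n → Fin M) (x : Fin n → ℝ) :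
    gridTensor h j x * gridTensor h j' x =
      ∏ r, gridBump h (j r) (x r) * gridBump h (j' r) (x r) :=
  Finset.prod_mul_distrib.symm

lemma integrable_gridTensor_mul (hh : 0 < h) (j j' : Fin n → Fin M) :
    Integrable fun x => gridTensor h j x * gridTensor h j' x := by
  simp only [gridTensor_mul_gridTensor]
  exact Integrable.fintype_prod fun r => integrable_gridBump_mul hh (j r) (j' r)

lemma integral_gridTensor_mul (hh : 0 < h) (j j' : Fin n → Fin M) :
    ∫ x, gridTensor h j x * gridTensor h j' x =
      if j = j' then (h⁻¹ * ∫ t, Gfun t ^ 2) ^ n else 0 := by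
  simp only [gridTensor_mul_gridTensor]
  rw [integral_fintype_prod_volume_eq_prod (fun r t => gridBump h (j r) t * gridBump h (j' r) t)]
  simp only [integral_gridBump_mul hh, Fin.val_inj]
  split_ifs with hjj
  · simp [hjj]
  · obtain ⟨r, hr⟩ := Function.ne_iff.1 hjj
    exact Finset.prod_eq_zero (Finset.mem_univ r) (if_neg hr)

end GridTensor

def unitCubeIndicator (n : ℕ) : (Fin n → ℝ) → ℝ := (Set.Icc 0 1).indicator 1

lemma unitCubeIndicator_nonneg {n : ℕ} (x : Fin n → ℝ) : 0 ≤ unitCubeIndicator n x :=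
  Set.indicator_nonneg (fun _ _ => zero_le_one) x

lemma abs_unitCubeIndicator_le_one {n : ℕ} (x : Fin n → ℝ) : |unitCubeIndicator n x| ≤ 1 := by
  rw [abs_of_nonneg (unitCubeIndicator_nonneg x)]
  exact Set.indicator_le_self' (fun _ _ => zero_le_one) x

lemma integrable_unitCubeIndicator (n : ℕ) : Integrable (unitCubeIndicator n) :=
  (integrable_indicator_iff measurableSet_Icc).2 (integrableOn_const (by simp [Real.volume_Icc_pi]))

lemma integral_unitCubeIndicator (n : ℕ) : ∫ x, unitCubeIndicator n x = 1 := by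
  rw [unitCubeIndicator, integral_indicator_one measurableSet_Icc, measureReal_def,
    Real.volume_Icc_pi]
  simp

def perturbation (p q : ℕ) (h : ℝ) (M : ℕ) (θ : (Fin p → Fin M) × (Fin q → Fin M) → ℝ)
    (z : (Fin p → ℝ) × (Fin q → ℝ)) : ℝ :=
  ∑ jl, θ jl * gridTensor h jl.1 z.1 * gridTensor h jl.2 z.2

lemma fTheta_eq (p q : ℕ) (δ C0 h : ℝ) (M : ℕ) (θ : (Fin p → Fin M) × (Fin q → Fin M) → ℝ)
    (z : (Fin p → ℝ) × (Fin q → ℝ)) :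
    fTheta p q δ C0 h M θ z = unitCubeIndicator p z.1 * unitCubeIndicator q z.2 +
      C0 * h ^ (δ + ((p : ℝ) + q)) * perturbation p q h M θ z := by
  rw [fTheta]
  congr 1
  simp only [unitCubeIndicator, Set.indicator, Set.mem_Icc, Pi.le_def, Pi.zero_apply,
    Pi.one_apply, ← forall_and]
  split_ifs <;> simp_all

section Perturbation

variable {p q M : ℕ} {h : ℝ} {θ : (Fin p → Fin M) × (Fin q → Fin M) → ℝ}

lemma abs_perturbation_le (hh : 0 < h) (hθ : ∀ jl, |θ jl| ≤ 1) (z : (Fin p → ℝ) × (Fin q → ℝ)) :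
    |perturbation p q h M θ z| ≤ (h⁻¹ * exp (-1)) ^ (p + q) := by
  refine abs_sum_le_of_support_subsingleton (by positivity) (fun jl => ?_) ?_
  · rw [abs_mul, abs_mul, pow_add]
    have h₁ := abs_gridTensor_le hh.le jl.1 z.1
    have h₂ := abs_gridTensor_le hh.le jl.2 z.2
    calc |θ jl| * |gridTensor h jl.1 z.1| * |gridTensor h jl.2 z.2|
        ≤ 1 * (h⁻¹ * exp (-1)) ^ p * (h⁻¹ * exp (-1)) ^ q := by gcongr; exact hθ jl
      _ = _ := by rw [one_mul]
  · intro jl hjl jl' hjl'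
    have hne : ∀ jl ∈ Function.support fun jl =>
        θ jl * gridTensor h jl.1 z.1 * gridTensor h jl.2 z.2,
        gridTensor h jl.1 z.1 ≠ 0 ∧ gridTensor h jl.2 z.2 ≠ 0 := fun jl hmem =>
      ⟨right_ne_zero_of_mul (left_ne_zero_of_mul hmem), right_ne_zero_of_mul hmem⟩
    exact Prod.ext (eq_of_gridTensor_ne_zero hh (hne jl hjl).1 (hne jl' hjl').1)
      (eq_of_gridTensor_ne_zero hh (hne jl hjl).2 (hne jl' hjl').2)

lemma mem_Icc_of_perturbation_ne_zero (hh : 0 < h) (hMh : M * h = 1)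
    {z : (Fin p → ℝ) × (Fin q → ℝ)} (hz : perturbation p q h M θ z ≠ 0) :
    z.1 ∈ Set.Icc 0 1 ∧ z.2 ∈ Set.Icc 0 1 := by
  obtain ⟨jl, -, hjl⟩ := Finset.exists_ne_zero_of_sum_ne_zero hz
  exact ⟨mem_Icc_of_gridTensor_ne_zero hh hMh (right_ne_zero_of_mul (left_ne_zero_of_mul hjl)),
    mem_Icc_of_gridTensor_ne_zero hh hMh (right_ne_zero_of_mul hjl)⟩

lemma integrable_perturbation (hh : h ≠ 0) : Integrable (perturbation p q h M θ) := by
  refine integrable_finsetSum _ fun jl _ => ?_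
  simp only [mul_assoc]
  rw [Measure.volume_eq_prod]
  exact ((integrable_gridTensor hh jl.1).mul_prod (integrable_gridTensor hh jl.2)).const_mul _

lemma integrable_perturbation_prodMk_left (hh : h ≠ 0) (x : Fin p → ℝ) :
    Integrable fun y => perturbation p q h M θ (x, y) :=
  integrable_finsetSum _ fun jl _ => by
    dsimp only
    exact (integrable_gridTensor hh jl.2).const_mul _

lemma integrable_perturbation_prodMk_right (hh : h ≠ 0) (y : Fin q → ℝ) :
    Integrable fun x => perturbation p q h M θ (x, y) :=
  integrable_finsetSum _ fun jl _ => by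
    dsimp only
    exact ((integrable_gridTensor hh jl.1).const_mul _).mul_const _

lemma integral_perturbation_prodMk_left (hh : h ≠ 0) (hq : 0 < q) (x : Fin p → ℝ) :
    ∫ y, perturbation p q h M θ (x, y) = 0 := by
  dsimp only [perturbation]
  rw [integral_finsetSum _ fun jl _ => (integrable_gridTensor hh jl.2).const_mul _]
  simp [integral_const_mul, integral_gridTensor hq]

lemma integral_perturbation_prodMk_right (hh : h ≠ 0) (hp : 0 < p) (y : Fin q → ℝ) :
    ∫ x, perturbation p q h M θ (x, y) = 0 := by
  dsimp only [perturbation]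
  rw [integral_finsetSum _ fun jl _ => ((integrable_gridTensor hh jl.1).const_mul _).mul_const _]
  simp [integral_mul_const, integral_const_mul, integral_gridTensor hp]

lemma integral_perturbation_sq (hh : 0 < h) :
    ∫ z, perturbation p q h M θ z ^ 2 = (∑ jl, θ jl ^ 2) * (h⁻¹ * ∫ t, Gfun t ^ 2) ^ (p + q) := by
  have hterm : ∀ jl jl' (z : (Fin p → ℝ) × (Fin q → ℝ)),
      θ jl * gridTensor h jl.1 z.1 * gridTensor h jl.2 z.2 *
        (θ jl' * gridTensor h jl'.1 z.1 * gridTensor h jl'.2 z.2) =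
      θ jl * θ jl' * ((gridTensor h jl.1 z.1 * gridTensor h jl'.1 z.1) *
        (gridTensor h jl.2 z.2 * gridTensor h jl'.2 z.2)) := fun _ _ _ => by ring
  unfold perturbation
  rw [Finset.sum_mul]
  refine integral_sum_sq_of_orthogonal
    (c := fun jl => θ jl ^ 2 * (h⁻¹ * ∫ t, Gfun t ^ 2) ^ (p + q))
    (fun jl jl' => ?_) (fun jl jl' => ?_)
  · simp only [hterm]
    rw [Measure.volume_eq_prod]
    exact ((integrable_gridTensor_mul hh _ _).mul_prod
      (integrable_gridTensor_mul hh _ _)).const_mul _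
  · simp only [hterm]
    rw [integral_const_mul, Measure.volume_eq_prod, integral_prod_mul (μ := volume) (ν := volume)
      (fun x => gridTensor h jl.1 x * gridTensor h jl'.1 x)
      (fun y => gridTensor h jl.2 y * gridTensor h jl'.2 y),
      integral_gridTensor_mul hh, integral_gridTensor_mul hh]
    rcases eq_or_ne jl jl' with rfl | hne
    · simp [sq, pow_add]
    · rw [if_neg hne]
      have hcomp : jl.1 ≠ jl'.1 ∨ jl.2 ≠ jl'.2 := by
        contrapose! hne
        exact Prod.ext hne.1 hne.2
      rcases hcomp with hne₁ | hne₂ <;> simp [*]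

end Perturbation

section FTheta

variable {p q M : ℕ} {δ C0 h : ℝ} {θ : (Fin p → Fin M) × (Fin q → Fin M) → ℝ}

lemma integrable_fTheta (hh : h ≠ 0) : Integrable (fTheta p q δ C0 h M θ) := by
  rw [funext (fTheta_eq p q δ C0 h M θ), Measure.volume_eq_prod]
  exact ((integrable_unitCubeIndicator p).mul_prod (integrable_unitCubeIndicator q)).add
    ((integrable_perturbation hh).const_mul _)

lemma marg1_fTheta (hh : h ≠ 0) (hq : 0 < q) (x : Fin p → ℝ) :
    marg1 p q (fTheta p q δ C0 h M θ) x = unitCubeIndicator p x := by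
  simp only [marg1, fTheta_eq]
  rw [integral_add ((integrable_unitCubeIndicator q).const_mul _)
      ((integrable_perturbation_prodMk_left hh x).const_mul _),
    integral_const_mul, integral_const_mul, integral_unitCubeIndicator,
    integral_perturbation_prodMk_left hh hq]
  ring

lemma marg2_fTheta (hh : h ≠ 0) (hp : 0 < p) (y : Fin q → ℝ) :
    marg2 p q (fTheta p q δ C0 h M θ) y = unitCubeIndicator q y := by
  simp only [marg2, fTheta_eq]
  rw [integral_add ((integrable_unitCubeIndicator p).mul_const _)
      ((integrable_perturbation_prodMk_right hh y).const_mul _),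
    integral_mul_const, integral_const_mul, integral_unitCubeIndicator,
    integral_perturbation_prodMk_right hh hp]
  ring

lemma integral_fTheta (hh : h ≠ 0) (hq : 0 < q) : ∫ z, fTheta p q δ C0 h M θ z = 1 := by
  have hint := integrable_fTheta (p := p) (q := q) (δ := δ) (C0 := C0) (M := M) (θ := θ) hh
  rw [Measure.volume_eq_prod] at hint ⊢
  rw [integral_prod _ hint]
  change ∫ x, marg1 p q (fTheta p q δ C0 h M θ) x = 1
  simp only [marg1_fTheta hh hq, integral_unitCubeIndicator]

lemma psiOf_fTheta (hh : h ≠ 0) (hp : 0 < p) (hq : 0 < q) (z : (Fin p → ℝ) × (Fin q → ℝ)) :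
    psiOf p q (fTheta p q δ C0 h M θ) z =
      C0 * h ^ (δ + ((p : ℝ) + q)) * perturbation p q h M θ z := by
  rw [psiOf, marg1_fTheta hh hq, marg2_fTheta hh hp, fTheta_eq, add_sub_cancel_left]

-- The perturbation is supported in the unit cube, where the uniform part equals `1`.
lemma fTheta_nonneg (hh : 0 < h) (hMh : M * h = 1) {z : (Fin p → ℝ) × (Fin q → ℝ)}
    (hsmall : |C0 * h ^ (δ + ((p : ℝ) + q)) * perturbation p q h M θ z| ≤ 1) :
    0 ≤ fTheta p q δ C0 h M θ z := by
  rw [fTheta_eq]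
  by_cases hz : perturbation p q h M θ z = 0
  · rw [hz, mul_zero, add_zero]
    exact mul_nonneg (unitCubeIndicator_nonneg _) (unitCubeIndicator_nonneg _)
  · obtain ⟨hz₁, hz₂⟩ := mem_Icc_of_perturbation_ne_zero hh hMh hz
    simp only [unitCubeIndicator, Set.indicator_of_mem hz₁, Set.indicator_of_mem hz₂,
      Pi.one_apply, one_mul]
    linarith [neg_abs_le (C0 * h ^ (δ + ((p : ℝ) + q)) * perturbation p q h M θ z)]

lemma abs_amplitude_mul_perturbation_le (hh : 0 < h) (hh₁ : h ≤ 1) (hδ : 0 ≤ δ) (hC0 : 0 ≤ C0)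
    (hθ : ∀ jl, |θ jl| ≤ 1) {B : ℝ} (hC0B : C0 ≤ B * exp ((p : ℝ) + q))
    (z : (Fin p → ℝ) × (Fin q → ℝ)) :
    |C0 * h ^ (δ + ((p : ℝ) + q)) * perturbation p q h M θ z| ≤ B := by
  have hexp : exp (-1) ^ (p + q) * exp ((p : ℝ) + q) = 1 := by
    rw [← Real.exp_nat_mul, ← Real.exp_add]
    push_cast
    simp
  calc |C0 * h ^ (δ + ((p : ℝ) + q)) * perturbation p q h M θ z|
      = C0 * h ^ (δ + ((p : ℝ) + q)) * |perturbation p q h M θ z| := by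
        rw [abs_mul, abs_of_nonneg (by positivity)]
    _ ≤ C0 * h ^ (δ + ((p : ℝ) + q)) * (h⁻¹ * exp (-1)) ^ (p + q) := by
        gcongr
        exact abs_perturbation_le hh hθ z
    _ = C0 * h ^ δ * exp (-1) ^ (p + q) := by
        rw [rpow_add_natCast_add hh.ne', mul_pow, inv_pow]
        field_simp
    _ ≤ C0 * 1 * exp (-1) ^ (p + q) := by
        gcongr
        exact Real.rpow_le_one hh.le hh₁ hδ
    _ = C0 * exp (-1) ^ (p + q) := by rw [mul_one]
    _ ≤ B * exp ((p : ℝ) + q) * exp (-1) ^ (p + q) := by gcongr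
    _ = B := by rw [mul_assoc, mul_comm (exp _), hexp, mul_one]

lemma sqrt_integral_psiOf_fTheta_sq (hh : 0 < h) (hMh : M * h = 1) (hp : 0 < p) (hq : 0 < q)
    (hC0 : 0 ≤ C0) (hθ : ∀ jl, θ jl ^ 2 = 1) :
    sqrt (∫ z, psiOf p q (fTheta p q δ C0 h M θ) z ^ 2) =
      C0 * sqrt (∫ t, Gfun t ^ 2) ^ (p + q) * h ^ δ := by
  have hM : (M : ℝ) = h⁻¹ := eq_inv_of_mul_eq_one_left hMh
  have hI : sqrt (∫ t, Gfun t ^ 2) ^ 2 = ∫ t, Gfun t ^ 2 :=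
    sq_sqrt (integral_nonneg fun t => sq_nonneg _)
  rw [← sqrt_sq (by positivity : 0 ≤ C0 * sqrt (∫ t, Gfun t ^ 2) ^ (p + q) * h ^ δ)]
  congr 1
  simp only [psiOf_fTheta hh.ne' hp hq, mul_pow _ (perturbation _ _ _ _ _ _)]
  rw [integral_const_mul, integral_perturbation_sq hh, rpow_add_natCast_add hh.ne',
    show (C0 * sqrt (∫ t, Gfun t ^ 2) ^ (p + q) * h ^ δ) ^ 2 =
      C0 ^ 2 * (sqrt (∫ t, Gfun t ^ 2) ^ 2) ^ (p + q) * (h ^ δ) ^ 2 by ring, hI]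
  simp only [hθ, Finset.sum_const, Finset.card_univ, Fintype.card_prod, Fintype.card_fun,
    Fintype.card_fin, nsmul_eq_mul, mul_one, Nat.cast_mul, Nat.cast_pow, hM]
  have hcancel : h ^ (p + q) * h⁻¹ ^ (p + q) = 1 := by
    rw [← mul_pow, mul_inv_cancel₀ hh.ne', one_pow]
  linear_combination C0 ^ 2 * (h ^ δ) ^ 2 * (∫ t, Gfun t ^ 2) ^ (p + q) *
    (h ^ (p + q) * h⁻¹ ^ (p + q) + 1) * hcancel

end FTheta

theorem stmt15_general (p q : ℕ) (hp : 0 < p) (hq : 0 < q)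
    (δ R' : ℝ) (hδ : 0 < δ) (hR' : 1 ≤ R')
    (M : ℕ) (hM : 0 < M) (h : ℝ) (hh : h = (M : ℝ)⁻¹)
    (C0 : ℝ) (hC0 : 0 < C0)
    (θ : (Fin p → Fin M) × (Fin q → Fin M) → ℝ) (hθ : ∀ jl, θ jl = 1 ∨ θ jl = -1) :
    (C0 ≤ min 1 (R' - 1) * Real.exp ((p : ℝ) + q) →
      ((∀ z, 0 ≤ fTheta p q δ C0 h M θ z) ∧
       (∫ z, fTheta p q δ C0 h M θ z) = 1 ∧
       (∀ z, |fTheta p q δ C0 h M θ z| ≤ R') ∧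
       (∀ x, |marg1 p q (fTheta p q δ C0 h M θ) x| ≤ R') ∧
       (∀ y, |marg2 p q (fTheta p q δ C0 h M θ) y| ≤ R'))) ∧
    Real.sqrt (∫ z, psiOf p q (fTheta p q δ C0 h M θ) z ^ 2) =
      C0 * (Real.sqrt (∫ t, Gfun t ^ 2)) ^ (p + q) * h ^ δ := by
  have hMpos : (0 : ℝ) < M := Nat.cast_pos.2 hM
  have hpos : 0 < h := hh ▸ inv_pos.2 hMpos
  have hMh : (M : ℝ) * h = 1 := hh ▸ mul_inv_cancel₀ hMpos.ne'
  have hh₁ : h ≤ 1 := hh ▸ inv_le_one_of_one_le₀ (Nat.one_le_cast.2 hM)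
  have hθ₁ : ∀ jl, |θ jl| = 1 := fun jl => by rcases hθ jl with hj | hj <;> simp [hj]
  refine ⟨fun hC0' => ?_, sqrt_integral_psiOf_fTheta_sq hpos hMh hp hq hC0.le
    fun jl => by rw [← sq_abs, hθ₁, one_pow]⟩
  have hsmall := abs_amplitude_mul_perturbation_le hpos hh₁ hδ.le hC0.le (fun jl => (hθ₁ jl).le)
    hC0'
  refine ⟨fun z => fTheta_nonneg hpos hMh ((hsmall z).trans (min_le_left _ _)),
    integral_fTheta hpos.ne' hq, fun z => ?_, fun x => ?_, fun y => ?_⟩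
  · rw [fTheta_eq]
    calc _ ≤ |unitCubeIndicator p z.1| * |unitCubeIndicator q z.2| + min 1 (R' - 1) :=
          (abs_add_le _ _).trans (by rw [abs_mul]; gcongr; exact hsmall z)
      _ ≤ 1 * 1 + (R' - 1) := by
          gcongr
          exacts [abs_unitCubeIndicator_le_one _, abs_unitCubeIndicator_le_one _, min_le_right _ _]
      _ = R' := by ring
  · exact (marg1_fTheta hpos.ne' hq x ▸ abs_unitCubeIndicator_le_one x).trans hR'
  · exact (marg2_fTheta hpos.ne' hp y ▸ abs_unitCubeIndicator_le_one y).trans hR'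

/-- Lemma 7 of the paper: properties of the alternatives `f_θ`.
If `C₀ ≤ min{1, R'−1}·e^{p+q}` then `f_θ` is a probability density with
`max{‖f_θ‖_∞, ‖f_{θ,1}‖_∞, ‖f_{θ,2}‖_∞} ≤ R'`; moreover
`‖f_θ − f_{θ,1}⊗f_{θ,2}‖₂ = C₀·‖G‖₂^{p+q}·h^δ`. -/
theorem stmt15 (p q : ℕ) (hp : 0 < p) (hq : 0 < q)
    (δ R R' : ℝ) (hδ : 0 < δ) (hR : 0 < R) (hR' : 1 ≤ R')
    (M : ℕ) (hM : 0 < M) (h : ℝ) (hh : h = (M : ℝ)⁻¹)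
    (C0 : ℝ) (hC0 : 0 < C0)
    (θ : (Fin p → Fin M) × (Fin q → Fin M) → ℝ) (hθ : ∀ jl, θ jl = 1 ∨ θ jl = -1) :
    (C0 ≤ min 1 (R' - 1) * Real.exp ((p : ℝ) + q) →
      ((∀ z, 0 ≤ fTheta p q δ C0 h M θ z) ∧
       (∫ z, fTheta p q δ C0 h M θ z) = 1 ∧
       (∀ z, |fTheta p q δ C0 h M θ z| ≤ R') ∧
       (∀ x, |marg1 p q (fTheta p q δ C0 h M θ) x| ≤ R') ∧
       (∀ y, |marg2 p q (fTheta p q δ C0 h M θ) y| ≤ R'))) ∧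
    Real.sqrt (∫ z, psiOf p q (fTheta p q δ C0 h M θ) z ^ 2) =
      C0 * (Real.sqrt (∫ t, Gfun t ^ 2)) ^ (p + q) * h ^ δ :=
  stmt15_general p q hp hq δ R' hδ hR' M hM h hh C0 hC0 θ hθ
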